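/- arXiv:1912.01338 — 2 statements merged into one kernel-verified Lean document; each statement's English description precedes it below -/
import Mathlib

section
/- For each pair $(i,j)$ with $1 \le i,j \le N$, let $x^{(i,j)}_1,\dots,x^{(i,j)}_m$ be elements of a commutative ring, and set $x^{(i,j)}_{m+1}=0$. Let $D(N,m)$ be the $Nm \times Nm$ block matrix whose $(i,j)$ block has $(r,s)$ entry $x^{(i,j)}_{\max(m+1-r,\, s)}$. For $1 \le k \le m$, let $X_{(k,k+1)}$ be the $N\times N$ matrix with $(i,j)$ entry $x^{(i,j)}_k - x^{(i,j)}_{k+1}$. Then $\det(D(N,m)) = (-1)^{N\lfloor m/2\rfloor}\prod_{k=1}^{m}\det(X_{(k,k+1)})$. -/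
open Finset Kronecker

private theorem teleIco {R : Type*} [CommRing R] (g : ℕ → R) (a b : ℕ) (h : a ≤ b) :
    ∑ k ∈ Finset.Ico a b, (g k - g (k + 1)) = g a - g b := by
  rw [Finset.sum_Ico_eq_sum_range]
  have h2 : ∀ k : ℕ, a + k + 1 = a + (k + 1) := fun k => by omega
  simp only [h2]
  rw [Finset.sum_range_sub' (fun i => g (a + i))]
  simp [Nat.add_sub_cancel' h]

private theorem detT (R : Type*) [CommRing R] (m : ℕ) :
    (Matrix.of fun r k : Fin m => if m ≤ r.1 + k.1 + 1 then (1:R) else 0).det = (-1) ^ (m / 2) := by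
  induction m with
  | zero => simp
  | succ m ih =>
    rw [Matrix.det_succ_row_zero]
    rw [Finset.sum_eq_single (Fin.last m)]
    · simp only [Matrix.of_apply, Fin.val_last, Fin.succAbove_last, Fin.val_zero, zero_add,
        le_refl, if_pos (le_refl (m+1)), mul_one]
      have hsub : ((Matrix.of fun r k : Fin (m+1) => if m + 1 ≤ r.1 + k.1 + 1 then (1:R) else 0).submatrix
          Fin.succ Fin.castSucc) = Matrix.of fun r k : Fin m => if m ≤ r.1 + k.1 + 1 then (1:R) else 0 := by
        ext r k
        simp only [Matrix.submatrix_apply, Matrix.of_apply, Fin.val_succ, Fin.coe_castSucc]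
        congr 1
        simp only [eq_iff_iff]
        omega
      rw [hsub, ih]
      rcases Nat.even_or_odd m with ⟨t, rfl⟩ | ⟨t, rfl⟩
      · have e1 : (t + t + 1) / 2 = (t + t) / 2 := by omega
        rw [e1, Even.neg_one_pow ⟨t, rfl⟩, one_mul]
        simp
      · have e1 : (2 * t + 1 + 1) / 2 = t + 1 := by omega
        have e2 : (2 * t + 1) / 2 = t := by omega
        rw [e1, e2, Odd.neg_one_pow ⟨t, rfl⟩, pow_succ]
        simp
    · intro j _ hj
      have hj' : ¬ (m + 1 ≤ (0:Fin (m+1)).1 + j.1 + 1) := by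
        intro hc
        apply hj
        have hlt := j.isLt
        have : j.1 = m := by simp only [Fin.val_zero, zero_add] at hc; omega
        exact Fin.ext (by simp [this])
      simp only [Matrix.of_apply, if_neg hj', mul_zero, zero_mul]
    · simp

private theorem detB {R : Type*} [CommRing R] (N m : ℕ) (y : ℕ → ℕ → ℕ → R) :
    (Matrix.of fun p q : Fin N × Fin m =>
      if q.2.1 ≤ p.2.1 then y (p.1.1 + 1) (q.1.1 + 1) (p.2.1 + 1) - y (p.1.1 + 1) (q.1.1 + 1) (p.2.1 + 2)
      else 0).det =
    ∏ k ∈ Finset.range m, (Matrix.of fun i j : Fin N =>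
      y (i.1 + 1) (j.1 + 1) (k + 1) - y (i.1 + 1) (j.1 + 1) (k + 2)).det := by
  have hBT : (Matrix.of fun p q : Fin N × Fin m =>
      if q.2.1 ≤ p.2.1 then y (p.1.1 + 1) (q.1.1 + 1) (p.2.1 + 1) - y (p.1.1 + 1) (q.1.1 + 1) (p.2.1 + 2)
      else 0).BlockTriangular (fun p => OrderDual.toDual p.2) := by
    intro p q h
    have h' : p.2 < q.2 := h
    exact if_neg (fun hc => absurd (Fin.lt_iff_val_lt_val.mp h') (by omega))
  rw [Matrix.BlockTriangular.det_fintype hBT]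
  rw [← Equiv.prod_comp (OrderDual.toDual (α := Fin m))]
  rw [← Fin.prod_univ_eq_prod_range (fun k => (Matrix.of fun i j : Fin N =>
      y (i.1 + 1) (j.1 + 1) (k + 1) - y (i.1 + 1) (j.1 + 1) (k + 2)).det) m]
  apply Finset.prod_congr rfl
  intro k _
  let e : Fin N ≃ {p : Fin N × Fin m // (fun p : Fin N × Fin m => OrderDual.toDual p.2) p = OrderDual.toDual k} :=
    { toFun := fun i => ⟨(i, k), rfl⟩
      invFun := fun p => p.1.1
      left_inv := fun i => rfl
      right_inv := by
        rintro ⟨⟨i, k'⟩, hp⟩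
        have hk : k' = k := hp
        subst hk
        rfl }
  rw [← Matrix.det_submatrix_equiv_self e]
  congr 1
  ext i j
  have he1 : (e i : Fin N × Fin m) = (i, k) := rfl
  have he2 : (e j : Fin N × Fin m) = (j, k) := rfl
  simp [Matrix.toSquareBlock_def, he1, he2]

theorem block_hook_det_D {R : Type*} [CommRing R] (N m : ℕ) (x : ℕ → ℕ → ℕ → R)
    (hx : ∀ i j, x i j (m + 1) = 0) :
    Matrix.det (Matrix.of fun p q : Fin N × Fin m =>
      x (p.1.1 + 1) (q.1.1 + 1) (max (m + 1 - (p.2.1 + 1)) (q.2.1 + 1))) =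
    (-1 : R) ^ (N * (m / 2)) * ∏ k ∈ Finset.range m, Matrix.det (Matrix.of fun i j : Fin N =>
      x (i.1 + 1) (j.1 + 1) (k + 1) - x (i.1 + 1) (j.1 + 1) (k + 2)) := by
  have hD : (Matrix.of fun p q : Fin N × Fin m =>
      x (p.1.1 + 1) (q.1.1 + 1) (max (m + 1 - (p.2.1 + 1)) (q.2.1 + 1))) =
      ((1 : Matrix (Fin N) (Fin N) R) ⊗ₖ (Matrix.of fun r k : Fin m => if m ≤ r.1 + k.1 + 1 then (1:R) else 0)) *
      (Matrix.of fun p q : Fin N × Fin m =>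
        if q.2.1 ≤ p.2.1 then x (p.1.1 + 1) (q.1.1 + 1) (p.2.1 + 1) - x (p.1.1 + 1) (q.1.1 + 1) (p.2.1 + 2)
        else 0) := by
    ext ⟨i, r⟩ ⟨j, s⟩
    rw [Matrix.mul_apply, Fintype.sum_prod_type]
    simp only [Matrix.kroneckerMap_apply, Matrix.one_apply, Matrix.of_apply, ite_mul, one_mul,
      zero_mul]
    rw [Finset.sum_comm]
    simp only [Finset.sum_ite_eq, Finset.mem_univ, if_true]
    have hterm : ∀ k : Fin m, (if m ≤ r.1 + k.1 + 1 then
        (if s.1 ≤ k.1 then x (i.1 + 1) (j.1 + 1) (k.1 + 1) - x (i.1 + 1) (j.1 + 1) (k.1 + 2) else 0)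
        else 0) =
        (if max (m - (r.1 + 1)) s.1 ≤ k.1 then
          x (i.1 + 1) (j.1 + 1) (k.1 + 1) - x (i.1 + 1) (j.1 + 1) (k.1 + 1 + 1) else 0) := by
      intro k
      split_ifs <;> first | (exfalso; omega) | ring1
    rw [Finset.sum_congr rfl (fun k _ => hterm k)]
    rw [Fin.sum_univ_eq_sum_range (fun t => if max (m - (r.1 + 1)) s.1 ≤ t then
      x (i.1 + 1) (j.1 + 1) (t + 1) - x (i.1 + 1) (j.1 + 1) (t + 1 + 1) else 0) m]
    rw [← Finset.sum_filter]
    have hfil : (Finset.range m).filter (fun t => max (m - (r.1 + 1)) s.1 ≤ t) =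
        Finset.Ico (max (m - (r.1 + 1)) s.1) m := by
      ext t
      simp only [Finset.mem_filter, Finset.mem_range, Finset.mem_Ico]
      omega
    have hsm := s.isLt
    have hrm := r.isLt
    rw [hfil, teleIco (fun t => x (i.1 + 1) (j.1 + 1) (t + 1)) _ m (by omega)]
    simp only [hx, sub_zero]
    congr 1
    omega
  rw [hD, Matrix.det_mul, Matrix.det_kronecker, Matrix.det_one, one_pow, one_mul, detT, detB,
    ← pow_mul, Fintype.card_fin, Nat.mul_comm]
end

section
/- For each pair $(i,j)$ with $1 \le i,j \le N$, let $x^{(i,j)}_1,\dots,x^{(i,j)}_m$ be elements of a commutative ring with $x^{(i,j)}_{m+1}=0$. Let $G'(N,m)$ be the $Nm\times Nm$ block matrix whose $(i,j)$ block has $(r,s)$ entry: $x^{(i,j)}_{m+1-\min(r,s)}$ if both $i,j$ are odd; $x^{(i,j)}_{\max(m+1-r,\,s)}$ if $i$ is odd and $j$ is even; $x^{(i,j)}_{\max(r,\,m+1-s)}$ if $i$ is even and $j$ is odd; and $x^{(i,j)}_{\max(r,s)}$ if both $i,j$ are even. Then $\det(G'(N,m)) = \prod_{k=1}^{m}\det(X_{(k,k+1)})$,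 where $X_{(k,k+1)}$ is the $N\times N$ matrix with $(i,j)$ entry $x^{(i,j)}_k - x^{(i,j)}_{k+1}$. -/
open Matrix Finset

namespace BlockHookAux

variable {R : Type*} [CommRing R]

/-- Upper unitriangular row-operation matrix: row r minus row r+1. -/
def Lm (m : ℕ) : Matrix (Fin m) (Fin m) R :=
  Matrix.of fun r b => (if b = r then 1 else 0) + (if b.1 = r.1 + 1 then -1 else 0)

/-- Lower unitriangular column matrix: entry 1 iff s ≤ t. -/
def Um (m : ℕ) : Matrix (Fin m) (Fin m) R :=
  Matrix.of fun t s => if s ≤ t then (1 : R) else 0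

lemma det_Lm (m : ℕ) : (Lm m : Matrix (Fin m) (Fin m) R).det = 1 := by
  rw [Matrix.det_of_upperTriangular]
  · refine Finset.prod_eq_one fun i _ => ?_
    simp [Lm, Fin.ext_iff]
  · intro i j h
    have h1 : (j : ℕ) < (i : ℕ) := h
    simp only [Lm, Matrix.of_apply]
    rw [if_neg (by simp [Fin.ext_iff]; omega), if_neg (by omega), add_zero]

lemma det_Um (m : ℕ) : (Um m : Matrix (Fin m) (Fin m) R).det = 1 := by
  rw [Matrix.det_of_lowerTriangular]
  · refine Finset.prod_eq_one fun i _ => ?_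
    simp [Um]
  · intro i j h
    have h1 : (i : ℕ) < (j : ℕ) := h
    simp only [Um, Matrix.of_apply]
    rw [if_neg (by intro hle; exact absurd (Fin.le_def.mp hle) (by omega))]

end BlockHookAux

open BlockHookAux

theorem block_hook_det_G' {R : Type*} [CommRing R] (N m : ℕ) (x : ℕ → ℕ → ℕ → R)
    (hx : ∀ i j, x i j (m + 1) = 0) :
    Matrix.det (Matrix.of fun p q : Fin N × Fin m =>
      if (p.1.1 + 1) % 2 = 1 then
        (if (q.1.1 + 1) % 2 = 1 then x (p.1.1 + 1) (q.1.1 + 1) (m + 1 - min (p.2.1 + 1) (q.2.1 + 1)) else x (p.1.1 + 1) (q.1.1 + 1) (max (m + 1 - (p.2.1 + 1)) (q.2.1 + 1)))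
      else
        (if (q.1.1 + 1) % 2 = 1 then x (p.1.1 + 1) (q.1.1 + 1) (max (p.2.1 + 1) (m + 1 - (q.2.1 + 1))) else x (p.1.1 + 1) (q.1.1 + 1) (max (p.2.1 + 1) (q.2.1 + 1)))) =
    ∏ k ∈ Finset.range m, Matrix.det (Matrix.of fun i j : Fin N =>
      x (i.1 + 1) (j.1 + 1) (k + 1) - x (i.1 + 1) (j.1 + 1) (k + 2)) := by
  classical
  set M2 : Matrix (Fin N × Fin m) (Fin N × Fin m) R :=
    Matrix.of fun p q => x (p.1.1 + 1) (q.1.1 + 1) (max (p.2.1 + 1) (q.2.1 + 1)) with hM2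
  set Y : Fin m → Matrix (Fin N) (Fin N) R :=
    fun k => Matrix.of fun i j =>
      x (i.1 + 1) (j.1 + 1) (k.1 + 1) - x (i.1 + 1) (j.1 + 1) (k.1 + 2) with hY
  -- the reversal permutation inside odd blocks
  have hf : Function.Involutive (fun p : Fin N × Fin m =>
      (p.1, if (p.1.1 + 1) % 2 = 1 then p.2.rev else p.2)) := by
    intro p
    obtain ⟨i, r⟩ := p
    by_cases h : (i.1 + 1) % 2 = 1 <;> simp [h, Fin.rev_rev]
  set e : Equiv.Perm (Fin N × Fin m) := hf.toPerm _ with he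
  -- Step 1: the original matrix is M2 reindexed by e on both sides
  have step1 : (Matrix.of fun p q : Fin N × Fin m =>
      if (p.1.1 + 1) % 2 = 1 then
        (if (q.1.1 + 1) % 2 = 1 then x (p.1.1 + 1) (q.1.1 + 1) (m + 1 - min (p.2.1 + 1) (q.2.1 + 1)) else x (p.1.1 + 1) (q.1.1 + 1) (max (m + 1 - (p.2.1 + 1)) (q.2.1 + 1)))
      else
        (if (q.1.1 + 1) % 2 = 1 then x (p.1.1 + 1) (q.1.1 + 1) (max (p.2.1 + 1) (m + 1 - (q.2.1 + 1))) else x (p.1.1 + 1) (q.1.1 + 1) (max (p.2.1 + 1) (q.2.1 + 1))))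
      = M2.submatrix e e := by
    ext ⟨i, r⟩ ⟨j, s⟩
    have hr : r.1 < m := r.2
    have hs : s.1 < m := s.2
    simp only [Matrix.of_apply, Matrix.submatrix_apply, he, Function.Involutive.coe_toPerm, hM2]
    by_cases h1 : (i.1 + 1) % 2 = 1 <;> by_cases h2 : (j.1 + 1) % 2 = 1 <;>
      simp only [h1, h2, if_true, if_false, if_pos, if_neg, Matrix.of_apply] <;>
      congr 1 <;> simp [Fin.val_rev] <;> omega
  rw [step1, Matrix.det_submatrix_equiv_self]
  -- Step 2: L * M2 = D * U
  set L : Matrix (Fin N × Fin m) (Fin N × Fin m) R :=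
    (Matrix.blockDiagonal fun _ : Fin N => (Lm m : Matrix (Fin m) (Fin m) R)).submatrix
      (Equiv.prodComm (Fin N) (Fin m)) (Equiv.prodComm (Fin N) (Fin m)) with hL
  set U : Matrix (Fin N × Fin m) (Fin N × Fin m) R :=
    (Matrix.blockDiagonal fun _ : Fin N => (Um m : Matrix (Fin m) (Fin m) R)).submatrix
      (Equiv.prodComm (Fin N) (Fin m)) (Equiv.prodComm (Fin N) (Fin m)) with hU
  set D : Matrix (Fin N × Fin m) (Fin N × Fin m) R := Matrix.blockDiagonal Y with hD
  have key : L * M2 = D * U := by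
    ext ⟨i, r⟩ ⟨j, s⟩
    rw [Matrix.mul_apply, Matrix.mul_apply, Fintype.sum_prod_type, Fintype.sum_prod_type]
    have hLHS : ∑ a : Fin N, ∑ b : Fin m, L (i, r) (a, b) * M2 (a, b) (j, s)
        = x (i.1 + 1) (j.1 + 1) (max (r.1 + 1) (s.1 + 1))
          - (if h : r.1 + 1 < m then x (i.1 + 1) (j.1 + 1) (max (r.1 + 2) (s.1 + 1)) else 0) := by
      have h1 : ∀ a : Fin N, ∑ b : Fin m, L (i, r) (a, b) * M2 (a, b) (j, s)
          = if i = a then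
              ∑ b : Fin m, (Lm m : Matrix (Fin m) (Fin m) R) r b *
                x (a.1 + 1) (j.1 + 1) (max (b.1 + 1) (s.1 + 1)) else 0 := by
        intro a
        by_cases h : i = a
        · subst h
          simp [hL, hM2, Matrix.blockDiagonal_apply]
        · simp [hL, hM2, Matrix.blockDiagonal_apply, h]
      rw [Finset.sum_congr rfl fun a _ => h1 a, Finset.sum_ite_eq univ i _, if_pos (mem_univ i)]
      have h2 : ∀ b : Fin m, (Lm m : Matrix (Fin m) (Fin m) R) r b *
            x (i.1 + 1) (j.1 + 1) (max (b.1 + 1) (s.1 + 1))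
          = (if b = r then x (i.1 + 1) (j.1 + 1) (max (b.1 + 1) (s.1 + 1)) else 0)
            + (if b.1 = r.1 + 1 then -x (i.1 + 1) (j.1 + 1) (max (b.1 + 1) (s.1 + 1)) else 0) := by
        intro b
        simp only [Lm, Matrix.of_apply, add_mul, ite_mul, one_mul, zero_mul, neg_mul, neg_one_mul]
      rw [Finset.sum_congr rfl fun b _ => h2 b, Finset.sum_add_distrib,
        Finset.sum_ite_eq' univ r _, if_pos (mem_univ r), sub_eq_add_neg]
      congr 1
      by_cases h : r.1 + 1 < m
      · rw [dif_pos h]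
        have h3 : ∀ b : Fin m,
            (if b.1 = r.1 + 1 then -x (i.1 + 1) (j.1 + 1) (max (b.1 + 1) (s.1 + 1)) else 0)
            = if b = (⟨r.1 + 1, h⟩ : Fin m) then
                -x (i.1 + 1) (j.1 + 1) (max (b.1 + 1) (s.1 + 1)) else 0 := by
          intro b; congr 1; simp [Fin.ext_iff]
        rw [Finset.sum_congr rfl fun b _ => h3 b, Finset.sum_ite_eq' univ _ _, if_pos (mem_univ _)]
      · rw [dif_neg h, neg_zero]
        refine Finset.sum_eq_zero fun b _ => if_neg ?_
        have := b.2; omega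
    have hRHS : ∑ a : Fin N, ∑ b : Fin m, D (i, r) (a, b) * U (a, b) (j, s)
        = (x (i.1 + 1) (j.1 + 1) (r.1 + 1) - x (i.1 + 1) (j.1 + 1) (r.1 + 2)) *
            (if s ≤ r then 1 else 0) := by
      have h1 : ∀ (a : Fin N) (b : Fin m), D (i, r) (a, b) * U (a, b) (j, s)
          = if r = b then (if a = j then (Y b i a) * (Um m : Matrix (Fin m) (Fin m) R) b s else 0)
            else 0 := by
        intro a b
        by_cases hb : r = b <;> by_cases ha : a = j <;>
          simp [hD, hU, Matrix.blockDiagonal_apply, hb, ha]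
      rw [Finset.sum_congr rfl fun a _ => Finset.sum_congr rfl fun b _ => h1 a b]
      simp only [Finset.sum_ite_eq, mem_univ, if_true]
      rw [Finset.sum_ite_eq' univ j _, if_pos (mem_univ j)]
      simp only [hY, Um, Matrix.of_apply, mul_ite, mul_one, mul_zero]
    rw [hLHS, hRHS]
    by_cases hsr : s ≤ r
    · have hsr' : s.1 ≤ r.1 := hsr
      rw [if_pos hsr, mul_one]
      have hmax1 : max (r.1 + 1) (s.1 + 1) = r.1 + 1 := by omega
      rw [hmax1]
      by_cases h : r.1 + 1 < m
      · rw [dif_pos h]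
        have : max (r.1 + 2) (s.1 + 1) = r.1 + 2 := by omega
        rw [this]
      · rw [dif_neg h]
        have hr2 : r.1 + 2 = m + 1 := by have := r.2; omega
        rw [hr2, hx]
    · have hsr' : r.1 < s.1 := by
        have := lt_of_not_ge hsr
        exact this
      rw [if_neg hsr, mul_zero]
      have h : r.1 + 1 < m := lt_of_le_of_lt hsr' s.2
      rw [dif_pos h]
      have h1 : max (r.1 + 1) (s.1 + 1) = s.1 + 1 := by omega
      have h2 : max (r.1 + 2) (s.1 + 1) = s.1 + 1 := by omega
      rw [h1, h2, sub_self]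
  -- conclude via determinants
  have hdetL : L.det = 1 := by
    rw [hL, Matrix.det_submatrix_equiv_self, Matrix.det_blockDiagonal]
    simp [det_Lm]
  have hdetU : U.det = 1 := by
    rw [hU, Matrix.det_submatrix_equiv_self, Matrix.det_blockDiagonal]
    simp [det_Um]
  have hdetD : D.det = ∏ k : Fin m, (Y k).det := by
    rw [hD, Matrix.det_blockDiagonal]
  have := congrArg Matrix.det key
  rw [Matrix.det_mul, Matrix.det_mul, hdetL, hdetU, one_mul, mul_one, hdetD] at this
  rw [this]
  exact Fin.prod_univ_eq_prod_range
    (fun k => Matrix.det (Matrix.of fun i j : Fin N =>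
      x (i.1 + 1) (j.1 + 1) (k + 1) - x (i.1 + 1) (j.1 + 1) (k + 2))) m
end
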